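/- Let (f*g)(x) = ∑_{(x)} π(f(x'))·ι(g(x'')) be a convolution-type product on linear maps from a coalgebra H to algebras, where for each pair (subobject, quotient) one has algebra morphisms π and ι that are compatible: π_{γ,Γ}∘π_{δ,γ} = π_{δ,Γ}, ι_{Γ,δ}∘ι_{Γ/δ,γ/δ} = ι_{Γ,γ}, and ι_{Γ,δ}∘π_{γ/δ,Γ/δ} = π_{γ,Γ}∘ι_{γ,δ}. Then this convolution product is associative. -/
import Mathlib


/- STATEMENT 18: Abstract form of the associativity of the convolution product
`(χ⊛η)(Γ) = ∑_{γ⊆Γ} π_{γ,Γ}[χ(γ)]·ι_{Γ,γ}[η(Γ/γ)]`. Given a system of objects with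
covering subobjects and contractions, commutative target algebras `V_Γ` and algebra
morphisms `π` and `ι` satisfying the compatibilities `π∘π = π`, `ι∘ι = ι`,
`ι∘π = π∘ι`, and the bijection `(γ, δ ⊆ γ) ↔ (δ, γ/δ ⊆ Γ/δ)`, the convolution is
associative. -/

/-- A system of objects (graphs), covering subobjects, and contractions: for every
subobject `γ` of `Γ` there are the subobject `s γ` and contracted `q γ` objects;
for `δ ⊆ γ ⊆ Γ` there is the composite subobject `comp γ δ ⊆ Γ` with
`s (comp γ δ) = s δ` and the quotient subobject `γ/δ = qsub γ δ ⊆ Γ/δ` with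
`s (γ/δ) = q δ` and `(Γ/δ)/(γ/δ) = q (qsub γ δ) = q γ`; and the pairing
`(γ, δ ⊆ γ) ↦ (comp γ δ, qsub γ δ)` is a bijection. -/
structure ConvSystem where
  Obj : Type
  Sub : Obj → Type
  [finSub : ∀ Γ, Fintype (Sub Γ)]
  s : ∀ {Γ : Obj}, Sub Γ → Obj
  q : ∀ {Γ : Obj}, Sub Γ → Obj
  comp : ∀ {Γ : Obj} (γ : Sub Γ), Sub (s γ) → Sub Γ
  s_comp : ∀ {Γ : Obj} (γ : Sub Γ) (δ : Sub (s γ)), s (comp γ δ) = s δ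
  qsub : ∀ {Γ : Obj} (γ : Sub Γ) (δ : Sub (s γ)), Sub (q (comp γ δ))
  s_qsub : ∀ {Γ : Obj} (γ : Sub Γ) (δ : Sub (s γ)), s (qsub γ δ) = q δ
  q_qsub : ∀ {Γ : Obj} (γ : Sub Γ) (δ : Sub (s γ)), q (qsub γ δ) = q γ
  bij : ∀ Γ : Obj, Function.Bijective
    (fun p : (γ : Sub Γ) × Sub (s γ) =>
      (⟨comp p.1 p.2, qsub p.1 p.2⟩ : (δ : Sub Γ) × Sub (q δ)))

attribute [instance] ConvSystem.finSub

variable (C : ConvSystem) (V : C.Obj → Type) [∀ Γ, CommRing (V Γ)]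
  (π : ∀ (Γ : C.Obj) (γ : C.Sub Γ), V (C.s γ) →+* V Γ)
  (ι : ∀ (Γ : C.Obj) (γ : C.Sub Γ), V (C.q γ) →+* V Γ)

/-- The convolution product `(χ⊛η)(Γ) = ∑_{γ⊆Γ} π_{γ,Γ}[χ(γ)]·ι_{Γ,γ}[η(Γ/γ)]`. -/
noncomputable def conv (χ η : ∀ Γ, V Γ) : ∀ Γ, V Γ :=
  fun Γ => ∑ γ : C.Sub Γ, π Γ γ (χ (C.s γ)) * ι Γ γ (η (C.q γ))

theorem conv_assoc
    -- compatibility π_{γ,Γ} ∘ π_{δ,γ} = π_{δ,Γ}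
    (hππ : ∀ (Γ : C.Obj) (γ : C.Sub Γ) (δ : C.Sub (C.s γ)) (v : V (C.s δ)),
      π Γ γ (π (C.s γ) δ v)
        = π Γ (C.comp γ δ) (cast (congrArg V (C.s_comp γ δ)).symm v))
    -- compatibility ι_{Γ,δ} ∘ ι_{Γ/δ,γ/δ} = ι_{Γ,γ}
    (hιι : ∀ (Γ : C.Obj) (γ : C.Sub Γ) (δ : C.Sub (C.s γ)) (w : V (C.q γ)),
      ι Γ (C.comp γ δ)
          (ι (C.q (C.comp γ δ)) (C.qsub γ δ)
            (cast (congrArg V (C.q_qsub γ δ)).symm w))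
        = ι Γ γ w)
    -- compatibility ι_{Γ,δ} ∘ π_{γ/δ,Γ/δ} = π_{γ,Γ} ∘ ι_{γ,δ}
    (hιπ : ∀ (Γ : C.Obj) (γ : C.Sub Γ) (δ : C.Sub (C.s γ)) (v : V (C.q δ)),
      ι Γ (C.comp γ δ)
          (π (C.q (C.comp γ δ)) (C.qsub γ δ)
            (cast (congrArg V (C.s_qsub γ δ)).symm v))
        = π Γ γ (ι (C.s γ) δ v))
    (χ η ξ : ∀ Γ, V Γ) :
    conv C V π ι (conv C V π ι χ η) ξ = conv C V π ι χ (conv C V π ι η ξ) := by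
  have hcast : ∀ {A B : C.Obj} (h : A = B) (f : ∀ Γ, V Γ),
      f A = cast (congrArg V h).symm (f B) := by
    intro A B h f; subst h; rfl
  funext Γ
  simp only [conv, map_sum, Finset.sum_mul, Finset.mul_sum]
  rw [Finset.sum_sigma', Finset.sum_sigma', Finset.univ_sigma_univ, Finset.univ_sigma_univ]
  refine (Fintype.sum_bijective _ (C.bij Γ)
    (fun p => (π Γ p.1) ((π (C.s p.1) p.2) (χ (C.s p.2)) * (ι (C.s p.1) p.2) (η (C.q p.2)))
      * (ι Γ p.1) (ξ (C.q p.1)))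
    (fun p => (π Γ p.1) (χ (C.s p.1))
      * (ι Γ p.1) ((π (C.q p.1) p.2) (η (C.s p.2)) * (ι (C.q p.1) p.2) (ξ (C.q p.2))))
    ?_)
  rintro ⟨γ, δ⟩
  simp only
  rw [map_mul, map_mul, hcast (C.s_comp γ δ) χ, ← hππ,
    hcast (C.s_qsub γ δ) η, hιπ, hcast (C.q_qsub γ δ) ξ, hιι]
  ring
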